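/- In a random bipartite graph G(m,n,p) with n ≥ m ≥ 2, for any η > 0 and p ∈ (0,1], the maximum degree satisfies P(Δ(G(m,n,p)) ≥ max{3np/2, 18(1+η)n log n / m}) ≤ 2n^{−η}, and if p ≥ 12(1+η) log n / m, the minimum degree satisfies P(δ(G(m,n,p)) ≤ mp/2) ≤ 2n^{−η}. -/

import Mathlib

open scoped Classical

/-- Probability of an event in the product Bernoulli(p) measure on configurations
`α → Bool` (each coordinate independently `true` with probability `p`). -/
noncomputable def pr {α : Type*} [Fintype α] (p : ℝ) (A : Set (α → Bool)) : ℝ :=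
  ∑ ω ∈ Finset.univ.filter (fun ω => ω ∈ A), ∏ e : α, (if ω e = true then p else 1 - p)

/-- The random bipartite graph on parts `Fin m` and `Fin n` determined by a
configuration of cross-edge indicators. -/
def bipGraph (m n : ℕ) (ω : Fin m × Fin n → Bool) : SimpleGraph (Fin m ⊕ Fin n) :=
  SimpleGraph.fromRel
    (fun x y => ∃ i j, x = Sum.inl i ∧ y = Sum.inr j ∧ ω (i, j) = true)

/-!
The degree of a vertex is the number of successes among its `m` or `n` incident pairs, a sum of
independent Bernoulli(`p`) indicators. Markov's inequality for `exp (s · degree)`, with `s = 1/2`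
for the upper tail and `s = -1` for the lower tail, together with `1 + x ≤ eˣ`, `e^{1/2} ≤ 5/3`
and `e⁻¹ ≤ 5/12`, bounds the failure probability at each vertex by `n^{-(1+η)}`; a union bound
over the `m + n ≤ 2n` vertices gives `2n^{-η}`.
-/
open Finset Real

section Bernoulli

variable {β : Type*} [Fintype β] {p : ℝ}

noncomputable def bernoulliWeight (p : ℝ) (ω : β → Bool) : ℝ :=
  ∏ e, if ω e then p else 1 - p

lemma bernoulliWeight_nonneg (h0 : 0 ≤ p) (h1 : p ≤ 1) (ω : β → Bool) :
    0 ≤ bernoulliWeight p ω :=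
  prod_nonneg fun e _ => by split <;> linarith

lemma pr_eq_sum_ite (p : ℝ) (A : Set (β → Bool)) :
    pr p A = ∑ ω, if ω ∈ A then bernoulliWeight p ω else 0 :=
  sum_filter _ _

lemma pr_mono (h0 : 0 ≤ p) (h1 : p ≤ 1) {A B : Set (β → Bool)} (hAB : A ⊆ B) :
    pr p A ≤ pr p B :=
  sum_le_sum_of_subset_of_nonneg (monotone_filter_right univ fun _ _ h => hAB h)
    fun ω _ _ => bernoulliWeight_nonneg h0 h1 ω

lemma pr_exists_le_sum {ι : Type*} [Fintype ι] (h0 : 0 ≤ p) (h1 : p ≤ 1)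
    (A : ι → Set (β → Bool)) :
    pr p {ω | ∃ i, ω ∈ A i} ≤ ∑ i, pr p (A i) := by
  simp_rw [pr_eq_sum_ite (β := β)]
  rw [sum_comm]
  refine sum_le_sum fun ω _ => ?_
  have hw := bernoulliWeight_nonneg h0 h1 ω
  have hterm : ∀ i, 0 ≤ if ω ∈ A i then bernoulliWeight p ω else 0 := fun i => by
    split <;> simp [hw]
  split_ifs with h
  · obtain ⟨i, hi⟩ := h
    exact (if_pos hi).symm.le.trans (single_le_sum (fun j _ => hterm j) (mem_univ i))
  · exact sum_nonneg fun i _ => hterm i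

lemma sum_bernoulliWeight_mul_prod (f : β → Bool → ℝ) :
    ∑ ω, bernoulliWeight p ω * ∏ e, f e (ω e) =
      ∏ e, (p * f e true + (1 - p) * f e false) := by
  simp_rw [bernoulliWeight, ← prod_mul_distrib]
  rw [← Fintype.prod_sum (fun e b => (if b then p else 1 - p) * f e b)]
  simp

lemma pr_le_sum_bernoulliWeight_mul (h0 : 0 ≤ p) (h1 : p ≤ 1) {A : Set (β → Bool)}
    {f : (β → Bool) → ℝ} (hf0 : ∀ ω, 0 ≤ f ω) (hf1 : ∀ ω ∈ A, 1 ≤ f ω) :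
    pr p A ≤ ∑ ω, bernoulliWeight p ω * f ω := by
  rw [pr_eq_sum_ite]
  refine sum_le_sum fun ω _ => ?_
  have hw := bernoulliWeight_nonneg h0 h1 ω
  split_ifs with hω
  · exact le_mul_of_one_le_right hw (hf1 ω hω)
  · exact mul_nonneg hw (hf0 ω)

lemma pr_mul_le_mul_card_filter_le (h0 : 0 ≤ p) (h1 : p ≤ 1) (T : Finset β) (s a : ℝ) :
    pr p {ω | s * a ≤ s * #{e ∈ T | ω e}} ≤ exp (-(s * a)) * (1 - p + p * exp s) ^ #T := by
  set f : β → Bool → ℝ := fun e b => if e ∈ T ∧ b then exp s else 1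
  have hexp : ∀ ω : β → Bool, exp (s * #{e ∈ T | ω e}) = ∏ e, f e (ω e) := fun ω => by
    rw [prod_ite, prod_const_one, mul_one, prod_const, ← exp_nat_mul, mul_comm, filter_and,
      filter_mem_eq_inter, univ_inter, inter_filter, inter_univ]
  calc pr p {ω | s * a ≤ s * #{e ∈ T | ω e}}
      ≤ ∑ ω, bernoulliWeight p ω * exp (s * #{e ∈ T | ω e} - s * a) :=
        pr_le_sum_bernoulliWeight_mul h0 h1 (fun _ => (exp_pos _).le)
          fun ω hω => one_le_exp (sub_nonneg.2 hω)
    _ = exp (-(s * a)) * ∑ ω, bernoulliWeight p ω * ∏ e, f e (ω e) := by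
        rw [mul_sum]
        refine sum_congr rfl fun ω _ => ?_
        rw [← hexp, sub_eq_add_neg, exp_add]
        ring
    _ = exp (-(s * a)) * (1 - p + p * exp s) ^ #T := by
        rw [sum_bernoulliWeight_mul_prod, ← prod_const,
          ← prod_subset (subset_univ T) fun e _ he => by simp [f, he]]
        exact congrArg _ (prod_congr rfl fun e he => by simp [f, he]; ring)

lemma exp_half_le : exp (1 / 2) ≤ 5 / 3 := by
  have hsq : exp (1 / 2) * exp (1 / 2) = exp 1 := by rw [← exp_add]; norm_num
  nlinarith [exp_one_lt_d9, exp_pos (1 / 2)]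

lemma one_sub_add_mul_exp_pow_le (h0 : 0 ≤ p) (h1 : p ≤ 1) (s : ℝ) (N : ℕ) :
    (1 - p + p * exp s) ^ N ≤ exp (N * (p * (exp s - 1))) := by
  rw [exp_nat_mul]
  refine pow_le_pow_left₀ (add_nonneg (sub_nonneg.2 h1) (mul_nonneg h0 (exp_pos s).le)) ?_ N
  linarith [add_one_le_exp (p * (exp s - 1))]

lemma pr_le_card_filter_le_exp (h0 : 0 ≤ p) (h1 : p ≤ 1) {T : Finset β} {t : ℝ}
    (hT : #T * p ≤ 2 / 3 * t) :
    pr p {ω | t ≤ #{e ∈ T | ω e}} ≤ exp (-(t / 18)) := by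
  have ht : 0 ≤ t := by nlinarith [mul_nonneg (Nat.cast_nonneg (α := ℝ) #T) h0]
  have hexp_le := exp_half_le
  have hexp_ge := one_le_exp (x := 1 / 2) (by norm_num)
  calc pr p {ω | t ≤ #{e ∈ T | ω e}}
      ≤ pr p {ω | 1 / 2 * t ≤ 1 / 2 * #{e ∈ T | ω e}} :=
        pr_mono h0 h1 fun _ hω =>
          mul_le_mul_of_nonneg_left hω (by norm_num : (0 : ℝ) ≤ 1 / 2)
    _ ≤ exp (-(1 / 2 * t)) * (1 - p + p * exp (1 / 2)) ^ #T :=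
        pr_mul_le_mul_card_filter_le h0 h1 T _ _
    _ ≤ exp (-(1 / 2 * t)) * exp (#T * (p * (exp (1 / 2) - 1))) := by
        gcongr; exact one_sub_add_mul_exp_pow_le h0 h1 _ _
    _ = exp (-(1 / 2 * t) + #T * p * (exp (1 / 2) - 1)) := by rw [exp_add]; ring_nf
    _ ≤ exp (-(t / 18)) := exp_le_exp.2 (by nlinarith)

lemma pr_card_filter_le_le_exp (h0 : 0 ≤ p) (h1 : p ≤ 1) {T : Finset β} {μ : ℝ}
    (hμ : 0 ≤ μ) (hT : μ ≤ #T * p) :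
    pr p {ω | (#{e ∈ T | ω e} : ℝ) ≤ μ / 2} ≤ exp (-(μ / 12)) := by
  have hexp_le : exp (-1) ≤ 5 / 12 := by linarith [exp_neg_one_lt_d9]
  calc pr p {ω | (#{e ∈ T | ω e} : ℝ) ≤ μ / 2}
      ≤ pr p {ω | -1 * (μ / 2) ≤ -1 * #{e ∈ T | ω e}} :=
        pr_mono h0 h1 fun _ hω =>
          mul_le_mul_of_nonpos_left hω (by norm_num : (-1 : ℝ) ≤ 0)
    _ ≤ exp (-(-1 * (μ / 2))) * (1 - p + p * exp (-1)) ^ #T :=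
        pr_mul_le_mul_card_filter_le h0 h1 T _ _
    _ ≤ exp (-(-1 * (μ / 2))) * exp (#T * (p * (exp (-1) - 1))) := by
        gcongr; exact one_sub_add_mul_exp_pow_le h0 h1 _ _
    _ = exp (μ / 2 + #T * p * (exp (-1) - 1)) := by rw [exp_add]; ring_nf
    _ ≤ exp (-(μ / 12)) := exp_le_exp.2 (by nlinarith)

end Bernoulli

section BipartiteGraph

variable {m n : ℕ}

def incidentEdges (m n : ℕ) : Fin m ⊕ Fin n → Finset (Fin m × Fin n)
  | .inl i => univ.map (Function.Embedding.sectR i (Fin n))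
  | .inr j => univ.map (Function.Embedding.sectL (Fin m) j)

lemma le_card_incidentEdges (hmn : m ≤ n) (v : Fin m ⊕ Fin n) :
    m ≤ #(incidentEdges m n v) := by
  cases v <;> simp [incidentEdges, hmn]

lemma card_incidentEdges_le (hmn : m ≤ n) (v : Fin m ⊕ Fin n) :
    #(incidentEdges m n v) ≤ n := by
  cases v <;> simp [incidentEdges, hmn]

lemma neighborFinset_bipGraph_inl (ω : Fin m × Fin n → Bool) (i : Fin m) :
    (bipGraph m n ω).neighborFinset (.inl i) =
      ({j | ω (i, j)} : Finset (Fin n)).map ⟨Sum.inr, Sum.inr_injective⟩ := by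
  ext u
  rw [SimpleGraph.mem_neighborFinset]
  cases u <;> simp [bipGraph]

lemma neighborFinset_bipGraph_inr (ω : Fin m × Fin n → Bool) (j : Fin n) :
    (bipGraph m n ω).neighborFinset (.inr j) =
      ({i | ω (i, j)} : Finset (Fin m)).map ⟨Sum.inl, Sum.inl_injective⟩ := by
  ext u
  rw [SimpleGraph.mem_neighborFinset]
  cases u <;> simp [bipGraph]

lemma degree_bipGraph (ω : Fin m × Fin n → Bool) (v : Fin m ⊕ Fin n) :
    (bipGraph m n ω).degree v = #{e ∈ incidentEdges m n v | ω e} := by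
  rw [← SimpleGraph.card_neighborFinset_eq_degree]
  cases v with
  | inl i => rw [neighborFinset_bipGraph_inl, incidentEdges, filter_map, card_map, card_map]; rfl
  | inr j => rw [neighborFinset_bipGraph_inr, incidentEdges, filter_map, card_map, card_map]; rfl

end BipartiteGraph

section DegreeBounds

variable {m n : ℕ} {η p : ℝ}

lemma pr_exists_vertex_le {β : Type*} [Fintype β] (hmn : m ≤ n) (hn : 0 < n)
    (h0 : 0 ≤ p) (h1 : p ≤ 1) {A : Fin m ⊕ Fin n → Set (β → Bool)}
    (hA : ∀ v, pr p (A v) ≤ exp (-((1 + η) * log n))) :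
    pr p {ω | ∃ v, ω ∈ A v} ≤ 2 * (n : ℝ) ^ (-η) := by
  have hn' : (0 : ℝ) < n := by exact_mod_cast hn
  have hexp : exp (-((1 + η) * log n)) = (n : ℝ) ^ (-η) / n := by
    rw [rpow_def_of_pos hn', ← exp_log hn', ← exp_sub, exp_log hn']
    ring_nf
  calc pr p {ω | ∃ v, ω ∈ A v}
      ≤ ∑ v, pr p (A v) := pr_exists_le_sum h0 h1 A
    _ ≤ ∑ _v : Fin m ⊕ Fin n, exp (-((1 + η) * log n)) := sum_le_sum fun v _ => hA v
    _ = (m + n) / n * (n : ℝ) ^ (-η) := by simp [hexp]; ring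
    _ ≤ 2 * (n : ℝ) ^ (-η) := by
        gcongr
        rw [div_le_iff₀ hn']
        linarith [(Nat.cast_le (α := ℝ)).2 hmn]

lemma pr_maxDegree_ge_le (hm : 0 < m) (hmn : m ≤ n) (hη : -1 ≤ η) (h0 : 0 ≤ p)
    (h1 : p ≤ 1) :
    pr p {ω | max (3 * (n : ℝ) * p / 2) (18 * (1 + η) * (n : ℝ) * log n / m)
      ≤ ((bipGraph m n ω).maxDegree : ℝ)} ≤ 2 * (n : ℝ) ^ (-η) := by
  set t := max (3 * (n : ℝ) * p / 2) (18 * (1 + η) * (n : ℝ) * log n / m)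
  have hm' : (0 : ℝ) < m := by exact_mod_cast hm
  have hmn' : (m : ℝ) ≤ n := by exact_mod_cast hmn
  have hL : 0 ≤ (1 + η) * log n := mul_nonneg (by linarith) (log_natCast_nonneg n)
  have htL : 18 * ((1 + η) * log n) ≤ t := by
    refine le_trans ?_ (le_max_right _ _)
    rw [le_div_iff₀ hm']
    nlinarith
  have : Nonempty (Fin m ⊕ Fin n) := ⟨.inl ⟨0, hm⟩⟩
  refine (pr_mono h0 h1 fun ω hω => ?_).trans
    (pr_exists_vertex_le (A := fun v => {ω | t ≤ #{e ∈ incidentEdges m n v | ω e}})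
      hmn (hm.trans_le hmn) h0 h1 fun v => ?_)
  · obtain ⟨v, hv⟩ := (bipGraph m n ω).exists_maximal_degree_vertex
    exact ⟨v, by rw [Set.mem_ofPred_eq, ← degree_bipGraph, ← hv]; exact hω⟩
  · refine (pr_le_card_filter_le_exp h0 h1 ?_).trans (exp_le_exp.2 (by linarith))
    have hcard : (#(incidentEdges m n v) : ℝ) ≤ n := by
      exact_mod_cast card_incidentEdges_le hmn v
    nlinarith [le_max_left (3 * (n : ℝ) * p / 2) (18 * (1 + η) * (n : ℝ) * log n / m)]

lemma pr_minDegree_le_le (hm : 0 < m) (hmn : m ≤ n) (h0 : 0 ≤ p) (h1 : p ≤ 1)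
    (hp : 12 * (1 + η) * log n / m ≤ p) :
    pr p {ω | ((bipGraph m n ω).minDegree : ℝ) ≤ m * p / 2} ≤ 2 * (n : ℝ) ^ (-η) := by
  have hm' : (0 : ℝ) < m := by exact_mod_cast hm
  have hmp : 12 * ((1 + η) * log n) ≤ m * p := by
    rw [div_le_iff₀ hm'] at hp
    linarith
  have : Nonempty (Fin m ⊕ Fin n) := ⟨.inl ⟨0, hm⟩⟩
  refine (pr_mono h0 h1 fun ω hω => ?_).trans (pr_exists_vertex_le
    (A := fun v => {ω | (#{e ∈ incidentEdges m n v | ω e} : ℝ) ≤ m * p / 2}) hmn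
      (hm.trans_le hmn) h0 h1 fun v => ?_)
  · obtain ⟨v, hv⟩ := (bipGraph m n ω).exists_minimal_degree_vertex
    exact ⟨v, by rw [Set.mem_ofPred_eq, ← degree_bipGraph, ← hv]; exact hω⟩
  · refine (pr_card_filter_le_le_exp h0 h1 (by positivity) ?_).trans
      (exp_le_exp.2 (by linarith))
    have hcard : (m : ℝ) ≤ #(incidentEdges m n v) := by
      exact_mod_cast le_card_incidentEdges hmn v
    exact mul_le_mul_of_nonneg_right hcard h0

end DegreeBounds

/-- Degree bounds for the random bipartite graph `G(m,n,p)` with `n ≥ m ≥ 2`: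
`P(Δ ≥ max{3np/2, 18(1+η)n log n / m}) ≤ 2n^{−η}`, and if `p ≥ 12(1+η) log n / m`
then `P(δ ≤ mp/2) ≤ 2n^{−η}`. -/
theorem stmt_8 (m n : ℕ) (hm : 2 ≤ m) (hmn : m ≤ n) (η p : ℝ) (hη : 0 < η)
    (hp0 : 0 < p) (hp1 : p ≤ 1) :
    pr p {ω : Fin m × Fin n → Bool |
        max (3 * (n : ℝ) * p / 2) (18 * (1 + η) * (n : ℝ) * Real.log n / m)
          ≤ ((bipGraph m n ω).maxDegree : ℝ)}
      ≤ 2 * (n : ℝ) ^ (-η)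
    ∧ (12 * (1 + η) * Real.log n / m ≤ p →
        pr p {ω : Fin m × Fin n → Bool |
            ((bipGraph m n ω).minDegree : ℝ) ≤ (m : ℝ) * p / 2}
          ≤ 2 * (n : ℝ) ^ (-η)) :=
  ⟨pr_maxDegree_ge_le (by omega) hmn (by linarith) hp0.le hp1,
    pr_minDegree_le_le (by omega) hmn hp0.le hp1⟩
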